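/- If π'_1, π'_2, ... are i.i.d. Beta(1, α₀) random variables with α₀ > 0, and π_k = π'_k · ∏_{l=1}^{k-1} (1 - π'_l), then ∑_{k=1}^∞ π_k = 1 almost surely. -/

import Mathlib

/-!
The partial sums telescope: `∑_{k<n} π_k = 1 - ∏_{l<n} (1 - π'_l)`, so it suffices that these
products tend to `0` almost surely. By independence, `E ∏_{l<n} (1 - π'_l) = c ^ n` with
`c = E (1 - π'_0) < 1`, since `π'_0 > 0` almost surely. Hence the products have summable
expectations, so almost surely they are summable and in particular tend to `0`.
-/

open MeasureTheory ProbabilityTheory Finset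

/-- The Beta(a, b) distribution on ℝ, defined via its density on (0,1). -/
noncomputable def betaMeasure (a b : ℝ) : Measure ℝ :=
  MeasureTheory.volume.withDensity (fun x =>
    ENNReal.ofReal (Set.indicator (Set.Ioo (0:ℝ) 1)
      (fun x => x ^ (a - 1) * (1 - x) ^ (b - 1) *
        (Real.Gamma (a + b) / (Real.Gamma a * Real.Gamma b))) x))

open Filter Topology ENNReal

theorem Finset.sum_range_mul_prod_one_sub {R : Type*} [CommRing R] (x : ℕ → R) (n : ℕ) :
    ∑ k ∈ range n, x k * ∏ l ∈ range k, (1 - x l) = 1 - ∏ l ∈ range n, (1 - x l) := by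
  induction n with
  | zero => simp
  | succ n ih => rw [sum_range_succ, ih, prod_range_succ]; ring

theorem hasSum_mul_prod_one_sub_of_tendsto {x : ℕ → ℝ} (hx : ∀ k, x k ∈ Set.Icc 0 1)
    (h : Tendsto (fun n => ∏ l ∈ range n, (1 - x l)) atTop (𝓝 0)) :
    HasSum (fun k => x k * ∏ l ∈ range k, (1 - x l)) 1 := by
  have hterm : ∀ k, 0 ≤ x k * ∏ l ∈ range k, (1 - x l) := fun k =>
    mul_nonneg (hx k).1 (prod_nonneg fun l _ => sub_nonneg.2 (hx l).2)
  rw [hasSum_iff_tendsto_nat_of_nonneg hterm]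
  simp_rw [sum_range_mul_prod_one_sub]
  simpa using h.const_sub 1

theorem MeasureTheory.ae_tendsto_zero_of_tsum_lintegral_ne_top {α : Type*} [MeasurableSpace α]
    {μ : Measure α} {f : ℕ → α → ℝ≥0∞} (hf : ∀ n, AEMeasurable (f n) μ)
    (h : ∑' n, ∫⁻ a, f n a ∂μ ≠ ∞) : ∀ᵐ a ∂μ, Tendsto (fun n => f n a) atTop (𝓝 0) := by
  rw [← lintegral_tsum hf] at h
  filter_upwards [ae_lt_top' (AEMeasurable.tsum hf) h] with a ha
  exact ENNReal.tendsto_atTop_zero_of_tsum_ne_top ha.ne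

theorem MeasureTheory.lintegral_ofReal_one_sub_lt_one {α : Type*} [MeasurableSpace α]
    {μ : Measure α} [IsProbabilityMeasure μ] {f : α → ℝ} (hf : ∀ᵐ a ∂μ, 0 < f a) :
    ∫⁻ a, ENNReal.ofReal (1 - f a) ∂μ < 1 := by
  have hlt : ∀ᵐ a ∂μ, ENNReal.ofReal (1 - f a) < 1 := by
    filter_upwards [hf] with a ha
    rw [← ENNReal.ofReal_one, ENNReal.ofReal_lt_ofReal_iff one_pos]
    linarith
  have hfin : ∫⁻ a, ENNReal.ofReal (1 - f a) ∂μ ≠ ∞ :=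
    ne_top_of_le_ne_top (by simp) (lintegral_mono_ae (μ := μ) (g := 1) (hlt.mono fun _ h => h.le))
  simpa using lintegral_strict_mono (IsProbabilityMeasure.ne_zero μ) aemeasurable_const hfin hlt

theorem MeasureTheory.ae_forall_of_map_eq {Ω α ι : Type*} [MeasurableSpace Ω] [MeasurableSpace α]
    [Countable ι] {μ : Measure Ω} {ν : Measure α} {X : ι → Ω → α} {p : α → Prop}
    (hmeas : ∀ i, AEMeasurable (X i) μ) (hlaw : ∀ i, μ.map (X i) = ν) (hν : ∀ᵐ x ∂ν, p x) :
    ∀ᵐ ω ∂μ, ∀ i, p (X i ω) :=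
  ae_all_iff.2 fun i => ae_of_ae_map (hmeas i) (hlaw i ▸ hν)

theorem ProbabilityTheory.ae_tendsto_prod_one_sub_zero {Ω : Type*} [MeasurableSpace Ω]
    {μ : Measure Ω} [IsProbabilityMeasure μ] {ν : Measure ℝ} {X : ℕ → Ω → ℝ}
    (hmeas : ∀ l, Measurable (X l)) (hindep : iIndepFun X μ) (hlaw : ∀ l, μ.map (X l) = ν)
    (hν : ∀ᵐ x ∂ν, x ∈ Set.Ioc 0 1) :
    ∀ᵐ ω ∂μ, Tendsto (fun n => ∏ l ∈ range n, (1 - X l ω)) atTop (𝓝 0) := by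
  set c := ∫⁻ x, ENNReal.ofReal (1 - x) ∂ν with hc_def
  have : IsProbabilityMeasure ν := hlaw 0 ▸ Measure.isProbabilityMeasure_map (hmeas 0).aemeasurable
  have hc : c < 1 := lintegral_ofReal_one_sub_lt_one (hν.mono fun _ h => h.1)
  have hmoment : ∀ l, ∫⁻ ω, ENNReal.ofReal (1 - X l ω) ∂μ = c := fun l => by
    rw [hc_def, ← hlaw l, lintegral_map (by fun_prop) (hmeas l)]
  have hprod : ∀ n, ∫⁻ ω, ∏ l ∈ range n, ENNReal.ofReal (1 - X l ω) ∂μ = c ^ n := fun n => by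
    rw [lintegral_prod_eq_prod_lintegral_of_indepFun _ (fun l ω => ENNReal.ofReal (1 - X l ω))
      (hindep.comp (fun _ x => ENNReal.ofReal (1 - x)) fun _ => by fun_prop) fun l => by fun_prop]
    simp [hmoment]
  have hsum : ∑' n, c ^ n ≠ ∞ := by
    rw [ENNReal.tsum_geometric]
    exact ENNReal.inv_ne_top.2 (tsub_pos_of_lt hc).ne'
  filter_upwards [ae_forall_of_map_eq (fun l => (hmeas l).aemeasurable) hlaw hν,
    ae_tendsto_zero_of_tsum_lintegral_ne_top
      (f := fun n ω => ∏ l ∈ range n, ENNReal.ofReal (1 - X l ω)) (fun n => by fun_prop)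
      (by simpa only [hprod] using hsum)] with ω hω hlim
  have hnonneg : ∀ n, 0 ≤ ∏ l ∈ range n, (1 - X l ω) := fun n =>
    prod_nonneg fun l _ => sub_nonneg.2 (hω l).2
  simp_rw [← ENNReal.ofReal_prod_of_nonneg (fun l _ => sub_nonneg.2 (hω l).2)] at hlim
  simpa [Function.comp_def, hnonneg] using (ENNReal.tendsto_toReal ENNReal.zero_ne_top).comp hlim

theorem betaMeasure_ae_mem_Ioo (a b : ℝ) : ∀ᵐ x ∂_root_.betaMeasure a b, x ∈ Set.Ioo 0 1 := by
  rw [_root_.betaMeasure, ae_iff, ← Set.compl_def, withDensity_apply _ measurableSet_Ioo.compl]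
  refine setLIntegral_eq_zero measurableSet_Ioo.compl fun x hx => ?_
  simp [Set.indicator_of_notMem hx]

theorem stick_breaking_sums_to_one_general
    {Ω : Type*} [MeasurableSpace Ω] (μ : Measure Ω) [IsProbabilityMeasure μ]
    (α₀ : ℝ)
    (π' : ℕ → Ω → ℝ) (hmeas : ∀ l, Measurable (π' l))
    (hindep : iIndepFun π' μ)
    (hlaw : ∀ l, μ.map (π' l) = _root_.betaMeasure 1 α₀) :
    ∀ᵐ ω ∂μ, HasSum (fun k => π' k ω * ∏ l ∈ Finset.range k, (1 - π' l ω)) 1 := by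
  have hsupport : ∀ᵐ x ∂_root_.betaMeasure 1 α₀, x ∈ Set.Ioc 0 1 :=
    (betaMeasure_ae_mem_Ioo 1 α₀).mono fun _ hx => Set.Ioo_subset_Ioc_self hx
  filter_upwards [ae_tendsto_prod_one_sub_zero hmeas hindep hlaw hsupport,
    ae_forall_of_map_eq (fun l => (hmeas l).aemeasurable) hlaw hsupport] with ω hlim hω
  exact hasSum_mul_prod_one_sub_of_tendsto (fun k => Set.Ioc_subset_Icc_self (hω k)) hlim

/-- Stick-breaking: if π'_0, π'_1, ... are i.i.d. Beta(1, α₀) with α₀ > 0, and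
π_k = π'_k ∏_{l<k} (1 - π'_l), then ∑_k π_k = 1 almost surely. -/
theorem stick_breaking_sums_to_one
    {Ω : Type*} [MeasurableSpace Ω] (μ : Measure Ω) [IsProbabilityMeasure μ]
    (α₀ : ℝ) (hα₀ : 0 < α₀)
    (π' : ℕ → Ω → ℝ) (hmeas : ∀ l, Measurable (π' l))
    (hindep : iIndepFun π' μ)
    (hlaw : ∀ l, μ.map (π' l) = _root_.betaMeasure 1 α₀) :
    ∀ᵐ ω ∂μ, HasSum (fun k => π' k ω * ∏ l ∈ Finset.range k, (1 - π' l ω)) 1 :=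
  stick_breaking_sums_to_one_general μ α₀ π' hmeas hindep hlaw
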